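/- For the S-TFBO iterates, for every t ≥ 1: ‖v_t‖ ≤ (√2/μ)·φ_{t+1} + (√2·C_{f_y}/μ)·√t. -/

import Mathlib

noncomputable section

open scoped RealInnerProductSpace

variable {dx dy : ℕ}

/-- Partial gradient in the first argument. -/
def gX (f : EuclideanSpace ℝ (Fin dx) → EuclideanSpace ℝ (Fin dy) → ℝ)
    (x : EuclideanSpace ℝ (Fin dx)) (y : EuclideanSpace ℝ (Fin dy)) :
    EuclideanSpace ℝ (Fin dx) :=
  gradient (fun x' => f x' y) x

/-- Partial gradient in the second argument. -/
def gY (f : EuclideanSpace ℝ (Fin dx) → EuclideanSpace ℝ (Fin dy) → ℝ)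
    (x : EuclideanSpace ℝ (Fin dx)) (y : EuclideanSpace ℝ (Fin dy)) :
    EuclideanSpace ℝ (Fin dy) :=
  gradient (fun y' => f x y') y

/-- Second derivative `∇_y∇_y g (x,y)` as a linear map `ℝ^{d_y} → ℝ^{d_y}`. -/
def gYY (g : EuclideanSpace ℝ (Fin dx) → EuclideanSpace ℝ (Fin dy) → ℝ)
    (x : EuclideanSpace ℝ (Fin dx)) (y : EuclideanSpace ℝ (Fin dy)) :
    EuclideanSpace ℝ (Fin dy) →L[ℝ] EuclideanSpace ℝ (Fin dy) :=
  fderiv ℝ (fun y' => gY g x y') y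

/-- Mixed second derivative `∇_x∇_y g (x,y)` as a linear map `ℝ^{d_y} → ℝ^{d_x}`. -/
def gXY (g : EuclideanSpace ℝ (Fin dx) → EuclideanSpace ℝ (Fin dy) → ℝ)
    (x : EuclideanSpace ℝ (Fin dx)) (y : EuclideanSpace ℝ (Fin dy)) :
    EuclideanSpace ℝ (Fin dy) →L[ℝ] EuclideanSpace ℝ (Fin dx) :=
  ContinuousLinearMap.adjoint (fderiv ℝ (fun x' => gY g x' y) x)

/-- Hypergradient estimator `∇̄f(x,y,v) := ∇_x f(x,y) − ∇_x∇_y g(x,y) v`. -/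
def barF (f g : EuclideanSpace ℝ (Fin dx) → EuclideanSpace ℝ (Fin dy) → ℝ)
    (x : EuclideanSpace ℝ (Fin dx)) (y v : EuclideanSpace ℝ (Fin dy)) :
    EuclideanSpace ℝ (Fin dx) :=
  gX f x y - gXY g x y v

/-- `∇_v R(x,y,v) = ∇_y∇_y g(x,y) v − ∇_y f(x,y)`. -/
def gradVR (f g : EuclideanSpace ℝ (Fin dx) → EuclideanSpace ℝ (Fin dy) → ℝ)
    (x : EuclideanSpace ℝ (Fin dx)) (y v : EuclideanSpace ℝ (Fin dy)) :
    EuclideanSpace ℝ (Fin dy) :=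
  gYY g x y v - gY f x y

/-
Restricted to a line `s ↦ y + s • v`, the `μ`-strongly convex `g(x, ·)` is `μ‖v‖²`-strongly convex,
so its second derivative `⟪∇_y∇_y g v, v⟫` at `s = 0` is at least `μ‖v‖²`; hence
`μ‖v_t‖ ≤ ‖∇_y∇_y g v_t‖ = ‖∇_v R + ∇_y f‖ ≤ γ_{t+1} + C_{f_y} ≤ φ_{t+1} + C_{f_y}`.
This is already stronger than the claim, as `√2 ≥ 1` and `√t ≥ 1`.
-/

open Set

section StrongConvexity

variable {E : Type*} [NormedAddCommGroup E]

lemma StrongConvexOn.comp_line [NormedSpace ℝ E] {h : E → ℝ} {μ : ℝ}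
    (hh : StrongConvexOn univ μ h) (y v : E) :
    StrongConvexOn univ (μ * ‖v‖ ^ 2) (fun t : ℝ => h (y + t • v)) := by
  refine ⟨convex_univ, fun s _ t _ a b ha hb hab => ?_⟩
  have key := hh.2 (mem_univ (y + s • v)) (mem_univ (y + t • v)) ha hb hab
  obtain rfl : b = 1 - a := by linarith
  have hcomb : a • (y + s • v) + (1 - a) • (y + t • v) = y + (a • s + (1 - a) • t) • v := by
    simp only [smul_eq_mul]; module
  have hdiff : ‖(y + s • v) - (y + t • v)‖ = ‖s - t‖ * ‖v‖ := by
    rw [← norm_smul, sub_smul, add_sub_add_left_eq_sub]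
  rw [hcomb, hdiff] at key
  simp only [smul_eq_mul] at key ⊢
  linarith [key, show (μ / 2 * (‖s - t‖ * ‖v‖) ^ 2) = μ * ‖v‖ ^ 2 / 2 * ‖s - t‖ ^ 2 by ring]

lemma StrongConvexOn.le_of_hasDerivAt_of_hasDerivAt {φ φ' : ℝ → ℝ} {m d t₀ : ℝ}
    (hφ : StrongConvexOn univ m φ) (hφ' : ∀ t, HasDerivAt φ (φ' t) t)
    (hd : HasDerivAt φ' d t₀) : m ≤ d := by
  have hconv : ConvexOn ℝ univ fun t => φ t - m / 2 * t ^ 2 := by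
    simpa only [Real.norm_eq_abs, sq_abs] using strongConvexOn_iff_convex.1 hφ
  have hderiv : ∀ t, HasDerivAt (fun t => φ t - m / 2 * t ^ 2) (φ' t - m * t) t := fun t =>
    ((hφ' t).sub ((hasDerivAt_pow 2 t).const_mul (m / 2))).congr_deriv (by norm_num; ring)
  have hmono : Monotone fun t => φ' t - m * t := fun a b hab => by
    have := hconv.monotoneOn_deriv (fun t _ => (hderiv t).differentiableAt)
      (mem_univ a) (mem_univ b) hab
    rwa [(hderiv a).deriv, (hderiv b).deriv] at this
  have hd' : HasDerivAt (fun t => φ' t - m * t) (d - m) t₀ :=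
    (hd.sub ((hasDerivAt_id' t₀).const_mul m)).congr_deriv (by ring)
  linarith [hd'.nonneg_of_monotone hmono]

variable [InnerProductSpace ℝ E]

lemma mul_norm_le_norm_of_mul_norm_sq_le_inner {μ : ℝ} {u v : E} (h : μ * ‖v‖ ^ 2 ≤ ⟪u, v⟫) :
    μ * ‖v‖ ≤ ‖u‖ := by
  rcases (norm_nonneg v).eq_or_lt with hv | hv
  · rw [← hv, mul_zero]; exact norm_nonneg u
  · refine le_of_mul_le_mul_right ?_ hv
    calc μ * ‖v‖ * ‖v‖ = μ * ‖v‖ ^ 2 := by ring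
      _ ≤ ‖u‖ * ‖v‖ := h.trans (real_inner_le_norm u v)

variable [CompleteSpace E]

lemma ContDiff.differentiable_gradient {h : E → ℝ} (hh : ContDiff ℝ 2 h) :
    Differentiable ℝ (gradient h) :=
  (InnerProductSpace.toDual ℝ E).symm.differentiable.comp
    ((hh.fderiv_right one_add_one_eq_two.le).differentiable one_ne_zero)

theorem StrongConvexOn.mul_norm_sq_le_inner_fderiv_gradient {h : E → ℝ} {μ : ℝ}
    (hh : StrongConvexOn univ μ h) (hd : Differentiable ℝ h) {y : E}
    (hgd : DifferentiableAt ℝ (gradient h) y) (v : E) :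
    μ * ‖v‖ ^ 2 ≤ ⟪fderiv ℝ (gradient h) y v, v⟫ := by
  have hline : ∀ t : ℝ, HasDerivAt (fun s : ℝ => y + s • v) v t := fun t => by
    simpa using ((hasDerivAt_id t).smul_const v).const_add y
  refine (hh.comp_line y v).le_of_hasDerivAt_of_hasDerivAt
    (φ' := fun t => ⟪gradient h (y + t • v), v⟫) (t₀ := 0) (fun t => ?_) ?_
  · exact (hd _).hasGradientAt.hasFDerivAt.comp_hasDerivAt t (hline t)
  · exact (hgd.hasFDerivAt.comp_hasDerivAt_of_eq 0 (hline 0) (by simp)).inner ℝ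
      (hasDerivAt_const _ v) |>.congr_deriv (by simp)

end StrongConvexity

lemma mul_norm_sq_le_inner_gYY {g : EuclideanSpace ℝ (Fin dx) → EuclideanSpace ℝ (Fin dy) → ℝ}
    (hg : ContDiff ℝ 2 (Function.uncurry g)) {μ : ℝ}
    (hsc : ∀ x, StrongConvexOn univ μ (fun y => g x y))
    (x : EuclideanSpace ℝ (Fin dx)) (y v : EuclideanSpace ℝ (Fin dy)) :
    μ * ‖v‖ ^ 2 ≤ ⟪gYY g x y v, v⟫ := by
  have hgx : ContDiff ℝ 2 (g x) := hg.comp (contDiff_const.prodMk contDiff_id)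
  exact (hsc x).mul_norm_sq_le_inner_fderiv_gradient (hgx.differentiable two_ne_zero)
    (hgx.differentiable_gradient y) v

lemma norm_gYY_apply_le (f g : EuclideanSpace ℝ (Fin dx) → EuclideanSpace ℝ (Fin dy) → ℝ)
    (x : EuclideanSpace ℝ (Fin dx)) (y v : EuclideanSpace ℝ (Fin dy)) :
    ‖gYY g x y v‖ ≤ ‖gradVR f g x y v‖ + ‖gY f x y‖ :=
  calc ‖gYY g x y v‖ = ‖gradVR f g x y v + gY f x y‖ := by rw [gradVR, sub_add_cancel]
    _ ≤ ‖gradVR f g x y v‖ + ‖gY f x y‖ := norm_add_le _ _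

theorem stfbo_v_bound_general
    (f g : EuclideanSpace ℝ (Fin dx) → EuclideanSpace ℝ (Fin dy) → ℝ)
    (hg : ContDiff ℝ 2 (Function.uncurry g))
    (μ Cfy : ℝ) (hμ : 0 < μ)
    (hsc : ∀ x, StrongConvexOn Set.univ μ (fun y => g x y))
    (hfy_bd : ∀ x y, ‖gY f x y‖ ≤ Cfy)
    (x : ℕ → EuclideanSpace ℝ (Fin dx)) (y v : ℕ → EuclideanSpace ℝ (Fin dy))
    (β γ φ : ℕ → ℝ)
    (hγ : ∀ t, γ (t + 1) = Real.sqrt ((γ t) ^ 2 + ‖gradVR f g (x t) (y t) (v t)‖ ^ 2))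
    (hφ : ∀ t, φ (t + 1) = max (β (t + 1)) (γ (t + 1))) :
    ∀ t : ℕ, 1 ≤ t →
      ‖v t‖ ≤ (Real.sqrt 2 / μ) * φ (t + 1) + (Real.sqrt 2 * Cfy / μ) * Real.sqrt t := by
  intro t ht
  have hCfy : 0 ≤ Cfy := (norm_nonneg _).trans (hfy_bd 0 0)
  have hγφ : γ (t + 1) ≤ φ (t + 1) := hφ t ▸ le_max_right _ _
  have hφ_nonneg : 0 ≤ φ (t + 1) := (hγ t ▸ Real.sqrt_nonneg _).trans hγφ
  have hR : ‖gradVR f g (x t) (y t) (v t)‖ ≤ γ (t + 1) :=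
    hγ t ▸ Real.le_sqrt_of_sq_le (le_add_of_nonneg_left (sq_nonneg _))
  have key : μ * ‖v t‖ ≤ φ (t + 1) + Cfy :=
    calc μ * ‖v t‖ ≤ ‖gYY g (x t) (y t) (v t)‖ :=
          mul_norm_le_norm_of_mul_norm_sq_le_inner (mul_norm_sq_le_inner_gYY hg hsc _ _ _)
      _ ≤ ‖gradVR f g (x t) (y t) (v t)‖ + ‖gY f (x t) (y t)‖ := norm_gYY_apply_le f g _ _ _
      _ ≤ φ (t + 1) + Cfy := add_le_add (hR.trans hγφ) (hfy_bd _ _)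
  have hsqrt2 : 1 ≤ Real.sqrt 2 := Real.one_le_sqrt.2 one_le_two
  have hsqrtt : 1 ≤ Real.sqrt t := Real.one_le_sqrt.2 (by exact_mod_cast ht)
  rw [div_mul_eq_mul_div, div_mul_eq_mul_div, ← add_div, le_div_iff₀ hμ]
  nlinarith [mul_le_mul hsqrt2 hsqrtt zero_le_one (by positivity)]

/-- rough bound on `v_t` for the S-TFBO iterates. -/
theorem stfbo_v_bound
    (f g : EuclideanSpace ℝ (Fin dx) → EuclideanSpace ℝ (Fin dy) → ℝ)
    (hf : ContDiff ℝ 2 (Function.uncurry f)) (hg : ContDiff ℝ 2 (Function.uncurry g))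
    (μ Cfy : ℝ) (hμ : 0 < μ)
    (hsc : ∀ x, StrongConvexOn Set.univ μ (fun y => g x y))
    (hfy_bd : ∀ x y, ‖gY f x y‖ ≤ Cfy)
    (x : ℕ → EuclideanSpace ℝ (Fin dx)) (y v : ℕ → EuclideanSpace ℝ (Fin dy))
    (α β γ φ : ℕ → ℝ)
    (hα0 : 1 ≤ α 0) (hβ0 : 0 < β 0) (hγ0 : 0 < γ 0) (hφ0 : φ 0 = max (β 0) (γ 0))
    (hβ : ∀ t, β (t + 1) = Real.sqrt ((β t) ^ 2 + ‖gY g (x t) (y t)‖ ^ 2))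
    (hγ : ∀ t, γ (t + 1) = Real.sqrt ((γ t) ^ 2 + ‖gradVR f g (x t) (y t) (v t)‖ ^ 2))
    (hφ : ∀ t, φ (t + 1) = max (β (t + 1)) (γ (t + 1)))
    (hα : ∀ t, α (t + 1) = Real.sqrt ((α t) ^ 2 + ‖barF f g (x t) (y t) (v t)‖ ^ 2))
    (hy : ∀ t, y (t + 1) = y t - (1 / β (t + 1)) • gY g (x t) (y t))
    (hv : ∀ t, v (t + 1) = v t - (1 / φ (t + 1)) • gradVR f g (x t) (y t) (v t))
    (hx : ∀ t, x (t + 1) = x t - (1 / (α (t + 1) * φ (t + 1))) • barF f g (x t) (y t) (v t)) :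
    ∀ t : ℕ, 1 ≤ t →
      ‖v t‖ ≤ (Real.sqrt 2 / μ) * φ (t + 1) + (Real.sqrt 2 * Cfy / μ) * Real.sqrt t :=
  stfbo_v_bound_general f g hg μ Cfy hμ hsc hfy_bd x y v β γ φ hγ hφ
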